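/- arXiv:2309.05393 — 6 statements merged into one kernel-verified Lean document; each statement's English description precedes it below -/
import Mathlib

section
/- Let γ > 0, κ > 0, α < 0 < β, and let φ̄ ∈ ℝ, λ̄ = proj_{[-1,1]}(-φ̄/γ), and ū = proj_{[α,β]}( -(1/κ)(φ̄ + γλ̄) ). Then ū = 0 if and only if |φ̄| ≤ γ. -/
/-- Sparsity characterization: with `λ̄ = proj_{[-1,1]}(-φ̄/γ)` and
`ū = proj_{[α,β]}(-(1/κ)(φ̄ + γλ̄))`, we have `ū = 0 ↔ |φ̄| ≤ γ`. -/
theorem stmt_4 (κ γ α β φb lb ub : ℝ) (hκ : 0 < κ) (hγ : 0 < γ) (hα : α < 0) (hβ : 0 < β)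
    (hlb : lb = max (-1) (min 1 (-φb / γ)))
    (hu : ub = max α (min β (-(1/κ) * (φb + γ * lb))))
    : ub = 0 ↔ |φb| ≤ γ := by
  constructor
  · intro h
    by_contra hc
    rw [not_le] at hc
    rcases abs_cases φb with ⟨he, _⟩ | ⟨he, _⟩
    · -- φb ≥ 0, γ < φb: lb = -1
      rw [he] at hc
      have h1 : -φb / γ ≤ -1 := by rw [div_le_iff₀ hγ]; linarith
      have hlbv : lb = -1 := by
        rw [hlb, max_eq_left (le_trans (min_le_right _ _) h1)]
      have harg : -(1/κ) * (φb + γ * lb) < 0 := by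
        rw [hlbv]
        have h2 : 0 < φb + γ * (-1) := by linarith
        have : 0 < (1/κ) * (φb + γ * (-1)) := by nlinarith [mul_pos (one_div_pos.mpr hκ) h2]
        linarith
      have : ub < 0 := by
        rw [hu, min_eq_right (le_of_lt (lt_trans harg hβ))]
        exact max_lt hα harg
      linarith
    · -- φb < 0, γ < -φb: lb = 1
      rw [he] at hc
      have h1 : (1:ℝ) ≤ -φb / γ := by rw [le_div_iff₀ hγ]; linarith
      have hlbv : lb = 1 := by
        rw [hlb, min_eq_left h1, max_eq_right (by linarith : (-1:ℝ) ≤ 1)]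
      have harg : 0 < -(1/κ) * (φb + γ * lb) := by
        rw [hlbv]
        have h2 : φb + γ * 1 < 0 := by linarith
        nlinarith [mul_pos (one_div_pos.mpr hκ) (neg_pos.mpr h2)]
      have : 0 < ub := by
        rw [hu]
        exact lt_max_of_lt_right (lt_min hβ harg)
      linarith
  · intro h
    rw [abs_le] at h
    have h1 : -φb / γ ≤ 1 := by rw [div_le_iff₀ hγ]; linarith
    have h2 : (-1:ℝ) ≤ -φb / γ := by rw [le_div_iff₀ hγ]; linarith
    have hlbv : lb = -φb / γ := by
      rw [hlb, min_eq_right h1, max_eq_right h2]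
    have hz : φb + γ * lb = 0 := by
      rw [hlbv]; field_simp; ring
    rw [hu, hz, mul_zero, min_eq_right (le_of_lt hβ), max_eq_right (le_of_lt hα)]
end

section
/- Let (Ω, μ) be a measure space and u ∈ L¹(μ) real-valued. For v ∈ L¹(μ), the directional derivative at u in direction v of the functional j(u) = ∫ |u| dμ exists and equals ∫_{u>0} v dμ − ∫_{u<0} v dμ + ∫_{u=0} |v| dμ; that is, lim_{t→0⁺} (j(u + t v) − j(u))/t = ∫_{u>0} v − ∫_{u<0} v + ∫_{u=0} |v|. -/
/-!
The difference quotients `(|u x + t v x| - |u x|) / t` are bounded by `|v x|` for `t > 0`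
and converge to the one-sided derivative of `|·|` at `u x` in direction `v x`, namely
`sign (u x) * v x` off the zero set of `u` and `|v x|` on it; dominated convergence finishes.
-/

open MeasureTheory Filter Set Topology

noncomputable def absDirDeriv (a b : ℝ) : ℝ := if a = 0 then |b| else SignType.sign a * b

lemma tendsto_abs_add_mul_sub_div (a b : ℝ) :
    Tendsto (fun t : ℝ => (|a + t * b| - |a|) / t) (𝓝[>] 0) (𝓝 (absDirDeriv a b)) := by
  by_cases ha : a = 0
  · subst ha
    rw [absDirDeriv, if_pos rfl]
    refine tendsto_const_nhds.congr' ?_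
    filter_upwards [self_mem_nhdsWithin] with t (ht : 0 < t)
    rw [zero_add, abs_zero, sub_zero, abs_mul, abs_of_pos ht, mul_div_cancel_left₀ _ ht.ne']
  · have hline : HasDerivAt (fun t : ℝ => a + t * b) b 0 := by
      simpa using ((hasDerivAt_id (0 : ℝ)).mul_const b).const_add a
    have := ((hasDerivAt_abs (by simpa using ha)).comp 0 hline).tendsto_slope_zero_right
    rw [absDirDeriv, if_neg ha]
    simpa [div_eq_inv_mul] using this

lemma abs_abs_add_mul_sub_div_le (a b : ℝ) {t : ℝ} (ht : 0 < t) :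
    |(|a + t * b| - |a|) / t| ≤ |b| := by
  rw [abs_div, abs_of_pos ht, div_le_iff₀ ht]
  calc |(|a + t * b| - |a|)| ≤ |a + t * b - a| := abs_abs_sub_abs_le_abs_sub _ _
    _ = |b| * t := by rw [add_sub_cancel_left, abs_mul, abs_of_pos ht, mul_comm]

lemma absDirDeriv_eq_indicator {Ω : Type*} (u v : Ω → ℝ) (x : Ω) :
    absDirDeriv (u x) (v x) = {x | 0 < u x}.indicator v x - {x | u x < 0}.indicator v x
      + {x | u x = 0}.indicator (fun x => |v x|) x := by
  rcases lt_trichotomy (u x) 0 with h | h | h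
  · simp [absDirDeriv, h, h.ne, h.not_gt]
  · simp [absDirDeriv, h]
  · simp [absDirDeriv, h, h.ne', h.not_gt]

lemma integral_absDirDeriv {Ω : Type*} [MeasurableSpace Ω] {μ : Measure Ω} {u v : Ω → ℝ}
    (hum : Measurable u) (hv : Integrable v μ) :
    ∫ x, absDirDeriv (u x) (v x) ∂μ = (∫ x in {x | 0 < u x}, v x ∂μ)
      - (∫ x in {x | u x < 0}, v x ∂μ) + ∫ x in {x | u x = 0}, |v x| ∂μ := by
  have hpos : MeasurableSet {x | 0 < u x} := measurableSet_lt measurable_const hum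
  have hneg : MeasurableSet {x | u x < 0} := measurableSet_lt hum measurable_const
  have hzero : MeasurableSet {x | u x = 0} := hum (measurableSet_singleton 0)
  simp_rw [absDirDeriv_eq_indicator u v]
  have hdiff : Integrable (fun x => {x | 0 < u x}.indicator v x - {x | u x < 0}.indicator v x) μ :=
    (hv.indicator hpos).sub (hv.indicator hneg)
  rw [integral_add hdiff (hv.abs.indicator hzero),
    integral_sub (hv.indicator hpos) (hv.indicator hneg), integral_indicator hpos,
    integral_indicator hneg, integral_indicator hzero]

lemma tendsto_integral_abs_add_mul_sub_div {Ω : Type*} [MeasurableSpace Ω] {μ : Measure Ω}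
    {u v : Ω → ℝ} (hu : AEStronglyMeasurable u μ) (hv : Integrable v μ) :
    Tendsto (fun t : ℝ => ∫ x, (|u x + t * v x| - |u x|) / t ∂μ) (𝓝[>] 0)
      (𝓝 (∫ x, absDirDeriv (u x) (v x) ∂μ)) := by
  refine tendsto_integral_filter_of_dominated_convergence (fun x => |v x|) ?_ ?_ hv.abs
    (ae_of_all _ fun x => tendsto_abs_add_mul_sub_div (u x) (v x))
  · have hv' := hv.1
    exact Eventually.of_forall fun t => by fun_prop
  · filter_upwards [self_mem_nhdsWithin] with t (ht : 0 < t)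
    exact ae_of_all _ fun x => abs_abs_add_mul_sub_div_le (u x) (v x) ht

/-- Directional derivative of the `L¹`-norm functional `j(w) = ∫ |w|` at `u` in
direction `v`:
`lim_{t→0⁺} (j(u+tv) - j(u))/t = ∫_{u>0} v - ∫_{u<0} v + ∫_{u=0} |v|`. -/
theorem stmt_5 {Ω : Type*} [MeasurableSpace Ω] (μ : Measure Ω) (u v : Ω → ℝ)
    (hum : Measurable u) (hu : Integrable u μ) (hv : Integrable v μ) :
    Tendsto (fun t : ℝ => ((∫ x, |u x + t * v x| ∂μ) - ∫ x, |u x| ∂μ) / t)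
      (nhdsWithin 0 (Set.Ioi 0))
      (nhds ((∫ x in {x | 0 < u x}, v x ∂μ) - (∫ x in {x | u x < 0}, v x ∂μ)
        + ∫ x in {x | u x = 0}, |v x| ∂μ)) := by
  rw [← integral_absDirDeriv hum hv]
  refine (tendsto_integral_abs_add_mul_sub_div hu.1 hv).congr fun t => ?_
  have hut : Integrable (fun x => u x + t * v x) μ := hu.add (hv.const_mul t)
  rw [integral_div, integral_sub hut.abs hu.abs]
end

section
/- Let X, Y be Banach spaces, V ⊆ X open, Φ: V → Y continuous, and ∂Φ a set-valued map into L(X,Y) with nonempty values such that Φ is ∂Φ-semismooth at a locally unique zero ū ∈ V (i.e., sup_{M ∈ ∂Φ(ū+v)} ‖Φ(ū+v) − Φ(ū) − M v‖ = o(‖v‖) as v → 0). Suppose there exists C > 0 such that every M ∈ ∂Φ(u) for u near ū is invertible with ‖M⁻¹‖ ≤ C. Then there exists δ > 0 such that for any u₀ with ‖u₀ − ū‖ < δ, the Newton iteration u_{j+1} = u_j − M_j⁻¹ Φ(u_j) (with any choice M_j ∈ ∂Φ(u_j)) is well defined and converges superlinearly to ū: ‖u_{j+1} − ū‖ / ‖u_j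 − ū‖ → 0. -/
/-!
Near `ū` each Newton step satisfies
`u - N Φ(u) - ū = -N (Φ u - Φ ū - M (u - ū))`, so the bound `‖N‖ ≤ C` and semismoothness give
`‖u⁺ - ū‖ ≤ C ε ‖u - ū‖` as soon as `u` is close enough to `ū`. With `C ε = 1/2` the errors
decrease geometrically, hence tend to zero, and then every `ε > 0` is eventually available,
which is superlinear convergence.
-/

open Filter Topology

section ErrorSequences

theorem tendsto_zero_of_step_le_mul {e : ℕ → ℝ} {δ q : ℝ} (he : ∀ j, 0 ≤ e j)
    (hq₀ : 0 ≤ q) (hq₁ : q < 1) (h₀ : e 0 < δ) (hstep : ∀ j, e j < δ → e (j + 1) ≤ q * e j) :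
    Tendsto e atTop (𝓝 0) := by
  have hgeom : ∀ j, e j < δ ∧ e j ≤ q ^ j * e 0 := by
    intro j
    induction j with
    | zero => simpa using h₀
    | succ j ih =>
      have hj := hstep j ih.1
      refine ⟨?_, ?_⟩
      · nlinarith [he j]
      · calc e (j + 1) ≤ q * (q ^ j * e 0) := hj.trans (by gcongr; exact ih.2)
          _ = q ^ (j + 1) * e 0 := by ring
  refine squeeze_zero he (fun j => (hgeom j).2) ?_
  simpa using (tendsto_pow_atTop_nhds_zero_of_lt_one hq₀ hq₁).mul_const (e 0)

theorem tendsto_succ_div_zero_of_step_le_mul {e : ℕ → ℝ} (he : ∀ j, 0 ≤ e j)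
    (hlim : Tendsto e atTop (𝓝 0))
    (hstep : ∀ ε > 0, ∃ δ > 0, ∀ j, e j < δ → e (j + 1) ≤ ε * e j) :
    Tendsto (fun j => e (j + 1) / e j) atTop (𝓝 0) := by
  rw [Metric.tendsto_atTop]
  intro ε hε
  obtain ⟨δ, hδ, hδstep⟩ := hstep (ε / 2) (half_pos hε)
  obtain ⟨J, hJ⟩ := (hlim.eventually (gt_mem_nhds hδ)).exists_forall_of_atTop
  refine ⟨J, fun j hj => ?_⟩
  have hle : e (j + 1) / e j ≤ ε / 2 := by
    rcases (he j).eq_or_lt with h | h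
    · rw [← h, div_zero]
      positivity
    · exact (div_le_iff₀ h).2 (hδstep j (hJ j hj))
  rw [Real.dist_eq, sub_zero, abs_of_nonneg (div_nonneg (he _) (he _))]
  linarith

end ErrorSequences

section NewtonStep

variable {X Y : Type*} [NormedAddCommGroup X] [NormedSpace ℝ X]
  [NormedAddCommGroup Y] [NormedSpace ℝ Y]

theorem newton_step_sub_eq {Φ : X → Y} {ub : X} (hzero : Φ ub = 0) {M : X →L[ℝ] Y}
    {N : Y →L[ℝ] X} (hNM : ∀ x, N (M x) = x) (u : X) :
    u - N (Φ u) - ub = -N (Φ u - Φ ub - M (u - ub)) := by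
  simp only [hzero, sub_zero, map_sub, hNM]
  abel

theorem norm_newton_step_sub_le {Φ : X → Y} {ub u : X} (hzero : Φ ub = 0)
    {M : X →L[ℝ] Y} {N : Y →L[ℝ] X} (hNM : ∀ x, N (M x) = x) {C ε : ℝ} (hN : ‖N‖ ≤ C)
    (hΦ : ‖Φ u - Φ ub - M (u - ub)‖ ≤ ε * ‖u - ub‖) :
    ‖u - N (Φ u) - ub‖ ≤ C * ε * ‖u - ub‖ :=
  calc ‖u - N (Φ u) - ub‖ = ‖N (Φ u - Φ ub - M (u - ub))‖ := by
        rw [newton_step_sub_eq hzero hNM, norm_neg]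
    _ ≤ ‖N‖ * ‖Φ u - Φ ub - M (u - ub)‖ := N.le_opNorm _
    _ ≤ C * (ε * ‖u - ub‖) := mul_le_mul hN hΦ (norm_nonneg _) ((norm_nonneg _).trans hN)
    _ = C * ε * ‖u - ub‖ := by ring

/-- A left inverse `N` of `M` coincides with the two-sided inverse supplied by `hinv`, so it
inherits the bound `‖N‖ ≤ C`. -/
theorem semismooth_newton_step_le {Φ : X → Y} {DΦ : X → Set (X →L[ℝ] Y)} {ub : X}
    (hzero : Φ ub = 0)
    (hss : ∀ ε > 0, ∃ δ > 0, ∀ v : X, ‖v‖ < δ →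
      ∀ M ∈ DΦ (ub + v), ‖Φ (ub + v) - Φ ub - M v‖ ≤ ε * ‖v‖)
    {C ρ : ℝ} (hC : 0 < C) (hρ : 0 < ρ)
    (hinv : ∀ u : X, ‖u - ub‖ < ρ → ∀ M ∈ DΦ u,
      ∃ N : Y →L[ℝ] X, ‖N‖ ≤ C ∧ (∀ x, N (M x) = x) ∧ (∀ y, M (N y) = y))
    {ε : ℝ} (hε : 0 < ε) :
    ∃ δ > 0, ∀ u : X, ‖u - ub‖ < δ → ∀ M ∈ DΦ u, ∀ N : Y →L[ℝ] X, (∀ x, N (M x) = x) →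
      ‖u - N (Φ u) - ub‖ ≤ ε * ‖u - ub‖ := by
  obtain ⟨δ, hδ, hδss⟩ := hss (ε / C) (div_pos hε hC)
  refine ⟨min δ ρ, lt_min hδ hρ, fun u hu M hM N hNM => ?_⟩
  obtain ⟨N', hN'C, -, hMN'⟩ := hinv u (hu.trans_le (min_le_right _ _)) M hM
  have hNN' : N = N' :=
    DFunLike.coe_injective (Function.LeftInverse.eq_rightInverse hNM hMN')
  have hΦ : ‖Φ u - Φ ub - M (u - ub)‖ ≤ ε / C * ‖u - ub‖ := by
    have := hδss (u - ub) (hu.trans_le (min_le_left _ _)) M (by rwa [add_sub_cancel])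
    rwa [add_sub_cancel] at this
  calc ‖u - N (Φ u) - ub‖ ≤ C * (ε / C) * ‖u - ub‖ :=
        norm_newton_step_sub_le hzero hNM (hNN' ▸ hN'C) hΦ
    _ = ε * ‖u - ub‖ := by rw [mul_div_cancel₀ _ hC.ne']

end NewtonStep

theorem stmt_9_general {X Y : Type*} [NormedAddCommGroup X] [NormedSpace ℝ X]
    [NormedAddCommGroup Y] [NormedSpace ℝ Y]
    (Φ : X → Y)
    (DΦ : X → Set (X →L[ℝ] Y))
    (ub : X) (hzero : Φ ub = 0)
    (hss : ∀ ε > 0, ∃ δ > 0, ∀ v : X, ‖v‖ < δ →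
      ∀ M ∈ DΦ (ub + v), ‖Φ (ub + v) - Φ ub - M v‖ ≤ ε * ‖v‖)
    (C : ℝ) (hC : 0 < C)
    (hinv : ∃ ρ > 0, ∀ u : X, ‖u - ub‖ < ρ → ∀ M ∈ DΦ u,
      ∃ N : Y →L[ℝ] X, ‖N‖ ≤ C ∧ (∀ x, N (M x) = x) ∧ (∀ y, M (N y) = y)) :
    ∃ δ > 0, ∀ (u : ℕ → X) (M : ℕ → X →L[ℝ] Y) (N : ℕ → Y →L[ℝ] X),
      ‖u 0 - ub‖ < δ →
      (∀ j, M j ∈ DΦ (u j)) →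
      (∀ j, (∀ x, N j (M j x) = x) ∧ (∀ y, M j (N j y) = y)) →
      (∀ j, u (j + 1) = u j - N j (Φ (u j))) →
      Tendsto u atTop (nhds ub) ∧
      Tendsto (fun j => ‖u (j + 1) - ub‖ / ‖u j - ub‖) atTop (nhds 0) := by
  obtain ⟨ρ, hρ, hinv⟩ := hinv
  have hstep := fun ε (hε : 0 < ε) => semismooth_newton_step_le hzero hss hC hρ hinv hε
  obtain ⟨δ, hδ, hhalf⟩ := hstep (1 / 2) one_half_pos
  refine ⟨δ, hδ, fun u M N h₀ hM hN hrec => ?_⟩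
  have herr : ∀ ε > 0, ∃ δ > 0, ∀ j, ‖u j - ub‖ < δ → ‖u (j + 1) - ub‖ ≤ ε * ‖u j - ub‖ := by
    intro ε hε
    obtain ⟨δ, hδ, hδstep⟩ := hstep ε hε
    exact ⟨δ, hδ, fun j hj => hrec j ▸ hδstep (u j) hj (M j) (hM j) (N j) (hN j).1⟩
  have hlim : Tendsto (fun j => ‖u j - ub‖) atTop (𝓝 0) :=
    tendsto_zero_of_step_le_mul (fun _ => norm_nonneg _) one_half_pos.le one_half_lt_one h₀
      fun j hj => hrec j ▸ hhalf (u j) hj (M j) (hM j) (N j) (hN j).1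
  exact ⟨tendsto_iff_norm_sub_tendsto_zero.2 hlim,
    tendsto_succ_div_zero_of_step_le_mul (fun _ => norm_nonneg _) hlim herr⟩

/-- Semismooth Newton convergence theorem: if `Φ` is `∂Φ`-semismooth at a locally
unique zero `ū` and the generalized derivatives near `ū` have uniformly bounded
inverses, then the Newton iteration started close enough to `ū` converges
superlinearly to `ū`. -/
theorem stmt_9 {X Y : Type*} [NormedAddCommGroup X] [NormedSpace ℝ X]
    [CompleteSpace X] [NormedAddCommGroup Y] [NormedSpace ℝ Y]
    (V : Set X) (hV : IsOpen V) (Φ : X → Y) (hΦc : ContinuousOn Φ V)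
    (DΦ : X → Set (X →L[ℝ] Y)) (hne : ∀ u ∈ V, (DΦ u).Nonempty)
    (ub : X) (hubV : ub ∈ V) (hzero : Φ ub = 0)
    (hloc : ∃ r > 0, ∀ u : X, ‖u - ub‖ < r → Φ u = 0 → u = ub)
    (hss : ∀ ε > 0, ∃ δ > 0, ∀ v : X, ‖v‖ < δ →
      ∀ M ∈ DΦ (ub + v), ‖Φ (ub + v) - Φ ub - M v‖ ≤ ε * ‖v‖)
    (C : ℝ) (hC : 0 < C)
    (hinv : ∃ ρ > 0, ∀ u : X, ‖u - ub‖ < ρ → ∀ M ∈ DΦ u,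
      ∃ N : Y →L[ℝ] X, ‖N‖ ≤ C ∧ (∀ x, N (M x) = x) ∧ (∀ y, M (N y) = y)) :
    ∃ δ > 0, ∀ (u : ℕ → X) (M : ℕ → X →L[ℝ] Y) (N : ℕ → Y →L[ℝ] X),
      ‖u 0 - ub‖ < δ →
      (∀ j, M j ∈ DΦ (u j)) →
      (∀ j, (∀ x, N j (M j x) = x) ∧ (∀ y, M j (N j y) = y)) →
      (∀ j, u (j + 1) = u j - N j (Φ (u j))) →
      Tendsto u atTop (nhds ub) ∧
      Tendsto (fun j => ‖u (j + 1) - ub‖ / ‖u j - ub‖) atTop (nhds 0) :=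
  stmt_9_general Φ DΦ ub hzero hss C hC hinv
end

section
/- Let γ > 0, κ > 0, α < 0 < β, τ ∈ (0, γ). Suppose φ̄, φ ∈ ℝ with |φ − φ̄| < τ, and γ < φ < γ − κα (i.e., the point lies in the inactive set J⁻ for φ). Define λ̄ = proj_{[-1,1]}(−φ̄/γ) and ū = proj_{[α,β]}(−(1/κ)(φ̄ + γλ̄)). Then |φ̄ + κū + γλ̄| ≤ τ and |φ̄| ≥ γ − τ. -/
/-!
The perturbed point satisfies `γ - τ < φ̄ < γ - κα + τ`, in particular `0 < φ̄`. If `φ̄ ≤ γ`, then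
`λ̄ = -φ̄/γ` cancels `φ̄` exactly, so `ū = 0` and the residual `φ̄ + κū + γλ̄` vanishes. If `γ ≤ φ̄`,
then `λ̄ = -1` and the residual is `max (φ̄ - γ + κα) 0`, which is below `τ` by the upper bound.
-/

noncomputable def projMultiplier (γ φ : ℝ) : ℝ := max (-1) (min 1 (-φ / γ))

noncomputable def projControl (κ γ α β φ : ℝ) : ℝ :=
  max α (min β (-(1 / κ) * (φ + γ * projMultiplier γ φ)))

section

variable {κ γ α β φ : ℝ}

lemma projMultiplier_of_abs_le (hγ : 0 < γ) (h : |φ| ≤ γ) : projMultiplier γ φ = -φ / γ := by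
  obtain ⟨hlo, hhi⟩ := abs_le.mp h
  rw [projMultiplier, min_eq_right, max_eq_right]
  · rw [le_div_iff₀ hγ]; linarith
  · rw [div_le_iff₀ hγ]; linarith

lemma projMultiplier_of_le (hγ : 0 < γ) (h : γ ≤ φ) : projMultiplier γ φ = -1 := by
  have hle : -φ / γ ≤ -1 := by rw [div_le_iff₀ hγ]; linarith
  rw [projMultiplier, min_eq_right (by linarith), max_eq_left hle]

lemma residual_eq_zero_of_abs_le (hγ : 0 < γ) (hα : α ≤ 0) (hβ : 0 ≤ β) (h : |φ| ≤ γ) :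
    φ + κ * projControl κ γ α β φ + γ * projMultiplier γ φ = 0 := by
  have hcancel : φ + γ * projMultiplier γ φ = 0 := by
    rw [projMultiplier_of_abs_le hγ h]; field_simp; ring
  rw [projControl, hcancel, mul_zero, min_eq_right hβ, max_eq_right hα, mul_zero, add_zero,
    hcancel]

lemma residual_eq_of_le (hκ : 0 < κ) (hγ : 0 < γ) (hβ : 0 ≤ β) (h : γ ≤ φ) :
    φ + κ * projControl κ γ α β φ + γ * projMultiplier γ φ = max (φ - γ + κ * α) 0 := by
  have hdesc : -(1 / κ) * (φ + γ * -1) ≤ β := by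
    have : 0 ≤ (1 / κ) * (φ - γ) := mul_nonneg (by positivity) (by linarith)
    linarith
  rw [projControl, projMultiplier_of_le hγ h, min_eq_right hdesc, mul_max_of_nonneg _ _ hκ.le,
    add_max, max_add]
  congr 1
  · ring
  · field_simp
    ring

end

theorem stmt_13_general (κ γ α β τ φb φ' lb ub : ℝ)
    (hκ : 0 < κ) (hγ : 0 < γ) (hα : α < 0) (hβ : 0 < β) (hτγ : τ < γ)
    (hclose : |φ' - φb| < τ) (h1 : γ < φ') (h2 : φ' < γ - κ * α)
    (hlb : lb = max (-1) (min 1 (-φb / γ)))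
    (hub : ub = max α (min β (-(1/κ) * (φb + γ * lb))))
    : |φb + κ * ub + γ * lb| ≤ τ ∧ γ - τ ≤ |φb| := by
  obtain ⟨hc1, hc2⟩ := abs_lt.mp hclose
  have hτ : 0 ≤ τ := (abs_nonneg _).trans hclose.le
  have hφ_lo : γ - τ < φb := by linarith
  refine ⟨?_, hφ_lo.le.trans (le_abs_self φb)⟩
  obtain rfl : lb = projMultiplier γ φb := hlb
  obtain rfl : ub = projControl κ γ α β φb := hub
  rcases le_or_gt γ φb with h | h
  · rw [residual_eq_of_le hκ hγ hβ.le h, abs_of_nonneg (le_max_right _ _)]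
    exact max_le (by linarith) hτ
  · rw [residual_eq_zero_of_abs_le hγ hα.le hβ.le (abs_le.mpr ⟨by linarith, h.le⟩), abs_zero]
    exact hτ

/-- Pointwise content of inclusion (41) for `J⁻`: if `γ < φ < γ - κα` and
`|φ - φ̄| < τ`, then `|φ̄ + κū + γλ̄| ≤ τ` and `|φ̄| ≥ γ - τ`. -/
theorem stmt_13 (κ γ α β τ φb φ' lb ub : ℝ)
    (hκ : 0 < κ) (hγ : 0 < γ) (hα : α < 0) (hβ : 0 < β) (hτ0 : 0 < τ) (hτγ : τ < γ)
    (hclose : |φ' - φb| < τ) (h1 : γ < φ') (h2 : φ' < γ - κ * α)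
    (hlb : lb = max (-1) (min 1 (-φb / γ)))
    (hub : ub = max α (min β (-(1/κ) * (φb + γ * lb))))
    : |φb + κ * ub + γ * lb| ≤ τ ∧ γ - τ ≤ |φb| :=
  stmt_13_general κ γ α β τ φb φ' lb ub hκ hγ hα hβ hτγ hclose h1 h2 hlb hub
end

section
/- Let γ > 0, κ > 0, α < 0 < β, τ ∈ (0, γ). Suppose φ̄, φ ∈ ℝ with |φ − φ̄| < τ and −γ − κβ < φ < −γ (inactive set J⁺). Define λ̄ = proj_{[-1,1]}(−φ̄/γ) and ū = proj_{[α,β]}(−(1/κ)(φ̄ + γλ̄)). Then |φ̄ + κū + γλ̄| ≤ τ and |φ̄| ≥ γ − τ. -/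
/-!
For `κ > 0`, the residual `c + κ u` of `u = proj_{[α,β]}(-c/κ)` is the projection of `0` onto
`[c + κα, c + κβ]`, so `|c + κ u| ≤ τ` as soon as this interval meets `[-τ, τ]`. Applied to `λ̄`
it gives `φ̄ + γλ̄ = max (φ̄ - γ) (min (φ̄ + γ) 0)`, which lies in `[-τ - κβ, τ]` because
`φ - τ < φ̄ < φ + τ` and `-γ - κβ < φ < -γ`; applied to `ū` with `κα < 0` it bounds the residual.
-/

theorem add_mul_max_min_neg_div {κ : ℝ} (hκ : 0 < κ) (α β c : ℝ) :
    c + κ * max α (min β (-c / κ)) = max (c + κ * α) (min (c + κ * β) 0) := by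
  rw [mul_max_of_nonneg _ _ hκ.le, mul_min_of_nonneg _ _ hκ.le, mul_div_cancel₀ _ hκ.ne',
    ← max_add_add_left, ← min_add_add_left, add_neg_cancel]

theorem stmt_14_general (κ γ α β τ φb φ' lb ub : ℝ)
    (hκ : 0 < κ) (hγ : 0 < γ) (hα : α < 0)
    (hclose : |φ' - φb| < τ) (h1 : -γ - κ * β < φ') (h2 : φ' < -γ)
    (hlb : lb = max (-1) (min 1 (-φb / γ)))
    (hub : ub = max α (min β (-(1/κ) * (φb + γ * lb))))
    : |φb + κ * ub + γ * lb| ≤ τ ∧ γ - τ ≤ |φb| := by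
  obtain ⟨hclose_lo, hclose_hi⟩ := abs_lt.mp hclose
  have hlb_res : φb + γ * lb = max (φb - γ) (min (φb + γ) 0) := by
    rw [hlb, add_mul_max_min_neg_div hγ, mul_neg_one, mul_one, ← sub_eq_add_neg]
  have hres : φb + κ * ub + γ * lb
      = max (φb + γ * lb + κ * α) (min (φb + γ * lb + κ * β) 0) := by
    rw [← add_mul_max_min_neg_div hκ, hub, neg_mul, one_div_mul_eq_div, neg_div]
    ring
  have hτ : 0 ≤ τ := (abs_nonneg _).trans hclose.le
  have hlb_res_le : φb + γ * lb ≤ τ :=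
    hlb_res ▸ max_le (by linarith) ((min_le_right _ _).trans hτ)
  have hlb_res_ge : -τ - κ * β ≤ φb + γ * lb :=
    hlb_res ▸ le_max_of_le_right (le_min (by linarith) (by linarith))
  refine ⟨?_, by linarith [neg_le_abs φb]⟩
  rw [hres, abs_le]
  exact ⟨le_max_of_le_right (le_min (by linarith) (by linarith)),
    max_le (by linarith [mul_neg_of_pos_of_neg hκ hα]) ((min_le_right _ _).trans hτ)⟩

/-- Pointwise content of inclusion (41) for `J⁺`: if `-γ - κβ < φ < -γ` and
`|φ - φ̄| < τ`, then `|φ̄ + κū + γλ̄| ≤ τ` and `|φ̄| ≥ γ - τ`. -/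
theorem stmt_14 (κ γ α β τ φb φ' lb ub : ℝ)
    (hκ : 0 < κ) (hγ : 0 < γ) (hα : α < 0) (hβ : 0 < β) (hτ0 : 0 < τ) (hτγ : τ < γ)
    (hclose : |φ' - φb| < τ) (h1 : -γ - κ * β < φ') (h2 : φ' < -γ)
    (hlb : lb = max (-1) (min 1 (-φb / γ)))
    (hub : ub = max α (min β (-(1/κ) * (φb + γ * lb))))
    : |φb + κ * ub + γ * lb| ≤ τ ∧ γ - τ ≤ |φb| :=
  stmt_14_general κ γ α β τ φb φ' lb ub hκ hγ hα hclose h1 h2 hlb hub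
end

section
/- Let (Ω, μ) be a measure space, and let φ̄, ū, λ̄: Ω → ℝ be measurable with α ≤ ū ≤ β a.e., κ > 0, γ ≥ 0, and ū(x) = proj_{[α,β]}(−(1/κ)(φ̄(x) + γλ̄(x))) a.e. Let v ∈ L²(μ) satisfy v ≥ 0 a.e. on {ū = α} and v ≤ 0 a.e. on {ū = β}. Then (φ̄(x) + κū(x) + γλ̄(x)) v(x) ≥ 0 for a.e. x. If moreover ∫ (φ̄ + κū + γλ̄) v dμ ≤ 0, then (φ̄(x) + κū(x) + γλ̄(x)) v(x) = 0 for a.e. x. -/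
open MeasureTheory

/- Write `s = -(φ̄ + γλ̄)/κ`, so that the residual is `φ̄ + κū + γλ̄ = κ (ū - s)` and `ū` is the clamp
of `s` to `[α, β]`. Pointwise, either `ū = s`, or `s < α = ū` (and then `v ≥ 0`), or `β = ū < s`
(and then `v ≤ 0`); in each case `(ū - s) v ≥ 0`. A nonnegative function with nonpositive integral
vanishes a.e. -/

lemma clamp_sub_mul_nonneg {R : Type*} [Ring R] [LinearOrder R] [IsStrictOrderedRing R]
    {a b s u w : R} (hab : a ≤ b) (hu : u = max a (min b s))
    (ha : u = a → 0 ≤ w) (hb : u = b → w ≤ 0) : 0 ≤ (u - s) * w := by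
  rcases le_total s a with hsa | has
  · have hua : u = a := by rw [hu, max_eq_left ((min_le_right b s).trans hsa)]
    exact mul_nonneg (by rw [hua]; exact sub_nonneg.mpr hsa) (ha hua)
  rcases le_total b s with hbs | hsb
  · have hub : u = b := by rw [hu, min_eq_left hbs, max_eq_right hab]
    exact mul_nonneg_of_nonpos_of_nonpos (by rw [hub]; exact sub_nonpos.mpr hbs) (hb hub)
  · rw [hu, min_eq_right hsb, max_eq_right has, sub_self, zero_mul]

lemma add_mul_add_eq_mul_sub {K : Type*} [Field K] {κ : K} (hκ : κ ≠ 0) (p u q : K) :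
    p + κ * u + q = κ * (u - -(1 / κ) * (p + q)) := by
  field_simp
  ring

theorem stmt_16_general {Ω : Type*} [MeasurableSpace Ω] (μ : Measure Ω)
    (φb ub lb v : Ω → ℝ) (α β κ γ : ℝ)
    (hκ : 0 < κ) (hαβ : α < β)
    (hproj : ∀ᵐ x ∂μ, ub x = max α (min β (-(1/κ) * (φb x + γ * lb x))))
    (hva : ∀ᵐ x ∂μ, ub x = α → 0 ≤ v x)
    (hvb : ∀ᵐ x ∂μ, ub x = β → v x ≤ 0) :
    (∀ᵐ x ∂μ, 0 ≤ (φb x + κ * ub x + γ * lb x) * v x) ∧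
    (Integrable (fun x => (φb x + κ * ub x + γ * lb x) * v x) μ →
      (∫ x, (φb x + κ * ub x + γ * lb x) * v x ∂μ) ≤ 0 →
      ∀ᵐ x ∂μ, (φb x + κ * ub x + γ * lb x) * v x = 0) := by
  have hsign : ∀ᵐ x ∂μ, 0 ≤ (φb x + κ * ub x + γ * lb x) * v x := by
    filter_upwards [hproj, hva, hvb] with x hp ha hb
    rw [add_mul_add_eq_mul_sub hκ.ne', mul_assoc]
    exact mul_nonneg hκ.le (clamp_sub_mul_nonneg hαβ.le hp ha hb)
  refine ⟨hsign, fun hint hle => ?_⟩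
  exact (integral_eq_zero_iff_of_nonneg_ae hsign hint).mp
    (le_antisymm hle (integral_nonneg_of_ae hsign))

/-- Lemma 2.7: the sign conditions of the critical cone combined with the
projection formula force pointwise complementarity. -/
theorem stmt_16 {Ω : Type*} [MeasurableSpace Ω] (μ : Measure Ω)
    (φb ub lb v : Ω → ℝ) (α β κ γ : ℝ)
    (hκ : 0 < κ) (hγ : 0 ≤ γ) (hαβ : α < β)
    (hφm : Measurable φb) (hum : Measurable ub) (hlm : Measurable lb)
    (hbound : ∀ᵐ x ∂μ, α ≤ ub x ∧ ub x ≤ β)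
    (hproj : ∀ᵐ x ∂μ, ub x = max α (min β (-(1/κ) * (φb x + γ * lb x))))
    (hv : MemLp v 2 μ)
    (hva : ∀ᵐ x ∂μ, ub x = α → 0 ≤ v x)
    (hvb : ∀ᵐ x ∂μ, ub x = β → v x ≤ 0) :
    (∀ᵐ x ∂μ, 0 ≤ (φb x + κ * ub x + γ * lb x) * v x) ∧
    (Integrable (fun x => (φb x + κ * ub x + γ * lb x) * v x) μ →
      (∫ x, (φb x + κ * ub x + γ * lb x) * v x ∂μ) ≤ 0 →
      ∀ᵐ x ∂μ, (φb x + κ * ub x + γ * lb x) * v x = 0) :=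
  stmt_16_general μ φb ub lb v α β κ γ hκ hαβ hproj hva hvb
end
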